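/- For the substitution x = u(1-v), y = v(1-u), the Jacobian-style inverse relations hold formally: u and v are the unique formal power series in x, y with zero constant term and u = x + S, v = y + S where S = (1-x-y-√Δ)/2, Δ = 1-2x-2y-2xy+x²+y². Equivalently, u := x + S and v := y + S satisfy x = u(1-v) and y = v(1-u) as formal power series identities. -/

import Mathlib

/-!
Writing `u = x + S`, `v = y + S`, one has `x - u (1 - v) = S² - (1 - x - y) S + x y`, so the
identities say exactly that `S` is a root of `T² - (1 - x - y) T + x y`, whose discriminant is
`(1 - x - y)² - 4 x y = Δ`; `S = (1 - x - y - √Δ) / 2` is the root given by the quadratic formula.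
Both identities are thus ring identities that hold in any commutative ring in which `2` is
invertible; the second is the first with `x` and `y` exchanged, since `Δ` is symmetric.
-/

open PowerSeries

/-- The variable `x` in `ℚ[[x]][[y]]` (outer variable). -/
noncomputable def Xv : PowerSeries (PowerSeries ℚ) := PowerSeries.X
/-- The variable `y` in `ℚ[[x]][[y]]`. -/
noncomputable def Yv : PowerSeries (PowerSeries ℚ) :=
  PowerSeries.C (R := PowerSeries ℚ) PowerSeries.X

section QuadraticSubstitution

variable {R : Type*} [CommRing R]

theorem add_mul_one_sub_add_eq_of_isRoot {x y S : R}
    (hS : S ^ 2 - (1 - x - y) * S + x * y = 0) :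
    (x + S) * (1 - (y + S)) = x := by
  linear_combination -hS

theorem isRoot_half_sub_sqrt_discrim {x y s c : R} (hc : 2 * c = 1)
    (hs : s ^ 2 = 1 - 2 * x - 2 * y - 2 * x * y + x ^ 2 + y ^ 2) :
    (c * (1 - x - y - s)) ^ 2 - (1 - x - y) * (c * (1 - x - y - s)) + x * y = 0 := by
  linear_combination c ^ 2 * hs +
    (c * (1 - x - y) ^ 2 - c * (1 - x - y) * s - (2 * c + 1) * x * y) * hc

end QuadraticSubstitution

theorem inverse_substitution_general (sq : PowerSeries (PowerSeries ℚ))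
    (hsq : sq ^ 2 = 1 - 2 * Xv - 2 * Yv - 2 * Xv * Yv + Xv ^ 2 + Yv ^ 2) :
    (Xv + PowerSeries.C (R := PowerSeries ℚ) (PowerSeries.C (R := ℚ) (1/2 : ℚ)) *
          (1 - Xv - Yv - sq)) *
        (1 - (Yv + PowerSeries.C (R := PowerSeries ℚ) (PowerSeries.C (R := ℚ) (1/2 : ℚ)) *
          (1 - Xv - Yv - sq))) = Xv ∧
    (Yv + PowerSeries.C (R := PowerSeries ℚ) (PowerSeries.C (R := ℚ) (1/2 : ℚ)) *
          (1 - Xv - Yv - sq)) *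
        (1 - (Xv + PowerSeries.C (R := PowerSeries ℚ) (PowerSeries.C (R := ℚ) (1/2 : ℚ)) *
          (1 - Xv - Yv - sq))) = Yv := by
  set c : PowerSeries (PowerSeries ℚ) := C (C (1 / 2 : ℚ))
  have hc : 2 * c = 1 := by
    rw [← map_ofNat (C.comp C) 2, RingHom.comp_apply, ← map_mul, ← map_mul]
    norm_num
  have hroot := isRoot_half_sub_sqrt_discrim hc hsq
  exact ⟨add_mul_one_sub_add_eq_of_isRoot hroot,
    add_mul_one_sub_add_eq_of_isRoot (x := Yv) (y := Xv) (by linear_combination hroot)⟩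

/-- With `sq` the square root of `Δ = 1-2x-2y-2xy+x²+y²` with constant term 1,
set `S = (1-x-y-sq)/2`, `u = x + S`, `v = y + S`.  Then `u(1-v) = x` and
`v(1-u) = y` as formal power series identities. -/
theorem inverse_substitution (sq : PowerSeries (PowerSeries ℚ))
    (hsq : sq ^ 2 = 1 - 2 * Xv - 2 * Yv - 2 * Xv * Yv + Xv ^ 2 + Yv ^ 2)
    (hconst : PowerSeries.constantCoeff (R := PowerSeries ℚ) sq = 1) :
    (Xv + PowerSeries.C (R := PowerSeries ℚ) (PowerSeries.C (R := ℚ) (1/2 : ℚ)) *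
          (1 - Xv - Yv - sq)) *
        (1 - (Yv + PowerSeries.C (R := PowerSeries ℚ) (PowerSeries.C (R := ℚ) (1/2 : ℚ)) *
          (1 - Xv - Yv - sq))) = Xv ∧
    (Yv + PowerSeries.C (R := PowerSeries ℚ) (PowerSeries.C (R := ℚ) (1/2 : ℚ)) *
          (1 - Xv - Yv - sq)) *
        (1 - (Xv + PowerSeries.C (R := PowerSeries ℚ) (PowerSeries.C (R := ℚ) (1/2 : ℚ)) *
          (1 - Xv - Yv - sq))) = Yv :=
  inverse_substitution_general sq hsq
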